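/- Let f : ℝ^d → ℝ be L-smooth, A ∈ ℝ^{m×d}, Δ ∈ {-1,1}^m a vector of signs, and δ > 0. Define y_i = (f(x + (δ/‖AᵀΔ‖²) AᵀΔ) - f(x)) · ‖AᵀΔ‖²/(δ Δ_i) for each i ∈ [m] (assuming AᵀΔ ≠ 0). Then y = A∇f(x) + e₁ + e₂ where [e₁]_i = Σ_{j≠i} (Δ_j/Δ_i)⟨∇f(x), a_j⟩ and ‖e₂‖₂ ≤ (L/2) δ √m. -/

import Mathlib

/-!
Put `u = (δ / ‖v‖²) • v`. The descent lemma for the `L`-Lipschitz gradient gives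
`f (x + u) - f x = ⟪∇f x, u⟫ + r` with `|r| ≤ L/2 ‖u‖² = L δ² / (2 ‖v‖²)`. After multiplying by
`‖v‖² / (δ Δᵢ)`, the linear part `⟪∇f x, v⟫ / Δᵢ = ∑ⱼ (Δⱼ / Δᵢ) ⟪∇f x, aⱼ⟫` splits into the
diagonal term `⟪aᵢ, ∇f x⟫` and `[e₁]ᵢ`, while the remainder becomes `e₂ = (r ‖v‖² / δ) • Δ⁻¹`:
a scalar of size at most `L δ / 2` times a vector of `±1` entries, of norm `√m`.
-/

open Real Finset

section DescentLemma

variable {E : Type*} [NormedAddCommGroup E] [InnerProductSpace ℝ E] [CompleteSpace E]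

theorem hasDerivAt_apply_add_smul_sub_inner_gradient {f : E → ℝ} (hf : Differentiable ℝ f)
    (x u : E) (t : ℝ) :
    HasDerivAt (fun s : ℝ => f (x + s • u) - f x - s * inner ℝ (gradient f x) u)
      (inner ℝ (gradient f (x + t • u) - gradient f x) u) t := by
  have hline : HasDerivAt (fun s : ℝ => x + s • u) u t := by
    simpa using ((hasDerivAt_id t).smul_const u).const_add x
  have hcomp : HasDerivAt (fun s : ℝ => f (x + s • u)) (inner ℝ (gradient f (x + t • u)) u) t :=
    (hf _).hasGradientAt.hasFDerivAt.comp_hasDerivAt t hline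
  rw [inner_sub_left]
  exact (hcomp.sub_const (f x)).sub (by simpa using hasDerivAt_mul_const (inner ℝ (gradient f x) u))

theorem abs_sub_sub_inner_gradient_le {f : E → ℝ} {L : ℝ} (hf : Differentiable ℝ f)
    (hL : ∀ u v : E, ‖gradient f u - gradient f v‖ ≤ L * ‖u - v‖) (x u : E) :
    |f (x + u) - f x - inner ℝ (gradient f x) u| ≤ L / 2 * ‖u‖ ^ 2 := by
  have hderiv := hasDerivAt_apply_add_smul_sub_inner_gradient hf x u
  have hB (t : ℝ) : HasDerivAt (fun s : ℝ => L / 2 * ‖u‖ ^ 2 * s ^ 2) (L * ‖u‖ ^ 2 * t) t :=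
    ((hasDerivAt_pow 2 t).const_mul (L / 2 * ‖u‖ ^ 2)).congr_deriv (by ring)
  have hbound : ∀ t ∈ Set.Ico (0 : ℝ) 1,
      ‖(inner ℝ (gradient f (x + t • u) - gradient f x) u : ℝ)‖ ≤ L * ‖u‖ ^ 2 * t := by
    rintro t ⟨ht, -⟩
    calc ‖(inner ℝ (gradient f (x + t • u) - gradient f x) u : ℝ)‖
        ≤ ‖gradient f (x + t • u) - gradient f x‖ * ‖u‖ := norm_inner_le_norm _ _
      _ ≤ L * ‖x + t • u - x‖ * ‖u‖ := by gcongr; exact hL _ _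
      _ = L * ‖u‖ ^ 2 * t := by
        rw [add_sub_cancel_left, norm_smul, Real.norm_of_nonneg ht]
        ring
  simpa using image_norm_le_of_norm_deriv_right_le_deriv_boundary
    (fun t _ => (hderiv t).continuousAt.continuousWithinAt)
    (fun t _ => (hderiv t).hasDerivWithinAt) (by simp) hB hbound
    (Set.right_mem_Icc.2 zero_le_one)

end DescentLemma

theorem EuclideanSpace.norm_eq_sqrt_card_of_forall_abs_eq_one {ι : Type*} [Fintype ι]
    {w : EuclideanSpace ℝ ι} (hw : ∀ i, |w i| = 1) : ‖w‖ = √(Fintype.card ι) := by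
  simp [EuclideanSpace.norm_eq, hw]

theorem sum_mul_div_eq_add_sum_sdiff_singleton {ι K : Type*} [Fintype ι] [DecidableEq ι] [Field K]
    (Δ c : ι → K) {i : ι} (hi : Δ i ≠ 0) :
    (∑ j, Δ j * c j) / Δ i = c i + ∑ j ∈ univ \ {i}, (Δ j / Δ i) * c j := by
  rw [sum_div, sum_eq_add_sum_sdiff_singleton_of_mem (mem_univ i), mul_div_cancel_left₀ _ hi]
  congr 1
  exact sum_congr rfl fun j _ => by ring

/-- SPSA combined-rows measurement decomposition: with perturbation direction
`AᵀΔ` (a `±1`-signed combination of the rows `a j`), the measurement vector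
decomposes as `y = A ∇f(x) + e₁ + e₂` where `[e₁]ᵢ = ∑_{j≠i} (Δⱼ/Δᵢ)⟨∇f(x), aⱼ⟩`
and `‖e₂‖ ≤ (L/2) δ √m`. -/
theorem stmt2 {d m : ℕ} (f : EuclideanSpace ℝ (Fin d) → ℝ) (L : ℝ) (δ : ℝ)
    (hδ : 0 < δ)
    (hf : Differentiable ℝ f)
    (hL : ∀ u v : EuclideanSpace ℝ (Fin d),
      ‖gradient f u - gradient f v‖ ≤ L * ‖u - v‖)
    (a : Fin m → EuclideanSpace ℝ (Fin d))
    (Δ : Fin m → ℝ) (hΔ : ∀ i, Δ i = 1 ∨ Δ i = -1)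
    (v : EuclideanSpace ℝ (Fin d)) (hv : v = ∑ j, Δ j • a j) (hv0 : v ≠ 0)
    (x : EuclideanSpace ℝ (Fin d)) (y : EuclideanSpace ℝ (Fin m))
    (hy : ∀ i, y i = (f (x + (δ / ‖v‖ ^ 2) • v) - f x) * (‖v‖ ^ 2 / (δ * Δ i))) :
    ∃ e₂ : EuclideanSpace ℝ (Fin m),
      (∀ i, y i = (inner ℝ (a i) (gradient f x) : ℝ)
          + (∑ j ∈ univ \ {i}, (Δ j / Δ i) * (inner ℝ (gradient f x) (a j) : ℝ))
          + e₂ i) ∧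
      ‖e₂‖ ≤ (L / 2) * δ * Real.sqrt m := by
  have hvn : 0 < ‖v‖ := norm_pos_iff.2 hv0
  have hΔabs (i : Fin m) : |Δ i| = 1 := (abs_eq zero_le_one).2 (hΔ i)
  have hΔne (i : Fin m) : Δ i ≠ 0 := fun h => by simpa [h] using hΔabs i
  set G := gradient f x
  set u := (δ / ‖v‖ ^ 2) • v
  set r := f (x + u) - f x - inner ℝ G u
  set c := r * ‖v‖ ^ 2 / δ
  have hc : |c| ≤ L / 2 * δ := by
    have hr : |r| ≤ L / 2 * ‖u‖ ^ 2 := abs_sub_sub_inner_gradient_le hf hL x u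
    rw [norm_smul, Real.norm_of_nonneg (by positivity)] at hr
    calc |c| = |r| * ‖v‖ ^ 2 / δ := by rw [abs_div, abs_mul, abs_of_pos hδ, abs_sq]
      _ ≤ L / 2 * (δ / ‖v‖ ^ 2 * ‖v‖) ^ 2 * ‖v‖ ^ 2 / δ := by gcongr
      _ = L / 2 * δ := by field_simp
  refine ⟨c • WithLp.toLp 2 (fun i => (Δ i)⁻¹), fun i => ?_, ?_⟩
  · have hGu : inner ℝ G u = δ / ‖v‖ ^ 2 * ∑ j, Δ j * inner ℝ G (a j) := by
      simp only [u, hv, inner_smul_right, inner_sum]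
    calc y i = (inner ℝ G u + r) * (‖v‖ ^ 2 / (δ * Δ i)) := by rw [hy i]; ring
      _ = (∑ j, Δ j * inner ℝ G (a j)) / Δ i + c * (Δ i)⁻¹ := by
        rw [hGu]
        simp only [c]
        field_simp
      _ = _ := by
        rw [sum_mul_div_eq_add_sum_sdiff_singleton Δ _ (hΔne i), real_inner_comm]
        simp
  · rw [norm_smul, EuclideanSpace.norm_eq_sqrt_card_of_forall_abs_eq_one (by simp [hΔabs]),
      Fintype.card_fin, Real.norm_eq_abs]
    gcongr
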